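/- arXiv:2604.07903 — 4 statements merged into one kernel-verified Lean document; each statement's English description precedes it below -/
import Mathlib

section
/- A finite graph G has maximum density at most d (every subgraph H with nonempty vertex set satisfies |E(H)| ≤ d·|V(H)|) if and only if there exists an orientation of G in which every vertex has in-degree at most d. -/
/-!
An orientation with in-degrees at most `d` is the same as a choice of a head among the two
endpoints of every edge such that each vertex is chosen at most `d` times, i.e. a matching of
the edges into `d` copies of the vertex set. By Hall's theorem such a matching exists iff any
`k` edges together have at least `k / d` endpoints, which is the density bound for the subgraph
these edges span. Conversely, charging every edge of a subgraph to its head gives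
`|E(H)| ≤ d |V(H)|`.
-/

open Finset

theorem Finset.exists_mem_ncard_fiber_le_of_card_le_mul_biUnion_card {ι α : Type*} [DecidableEq α]
    (t : ι → Finset α) (d : ℕ) (hall : ∀ s : Finset ι, #s ≤ d * #(s.biUnion t)) :
    ∃ f : ι → α, (∀ i, f i ∈ t i) ∧ ∀ a, {i | f i = a}.ncard ≤ d := by
  have hall' : ∀ s : Finset ι, #s ≤ #(s.biUnion fun i => t i ×ˢ (univ : Finset (Fin d))) := by
    intro s
    have hprod : s.biUnion (fun i => t i ×ˢ (univ : Finset (Fin d))) = s.biUnion t ×ˢ univ := by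
      ext; simp
    rw [hprod, card_product, card_univ, Fintype.card_fin, mul_comm]
    exact hall s
  obtain ⟨g, hg_inj, hg_mem⟩ := (all_card_le_biUnion_card_iff_exists_injective _).mp hall'
  refine ⟨fun i => (g i).1, fun i => (mem_product.mp (hg_mem i)).1, fun a => ?_⟩
  calc {i | (g i).1 = a}.ncard ≤ (Set.univ : Set (Fin d)).ncard := by
        refine Set.ncard_le_ncard_of_injOn (fun i => (g i).2) (fun _ _ => trivial) ?_
        intro i hi j hj hij
        exact hg_inj (Prod.ext (hi.trans hj.symm) hij)
    _ = d := by rw [Set.ncard_univ, Nat.card_eq_fintype_card, Fintype.card_fin]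

namespace SimpleGraph

variable {V : Type*} {G : SimpleGraph V}

def subgraphOfEdges (s : Set (Sym2 V)) (hs : s ⊆ G.edgeSet) : G.Subgraph where
  verts := {v | ∃ e ∈ s, v ∈ e}
  Adj u v := s(u, v) ∈ s
  adj_sub h := hs h
  edge_vert h := ⟨_, h, Sym2.mem_mk_left _ _⟩
  symm := ⟨fun _ _ h => by rwa [Sym2.eq_swap]⟩

@[simp]
theorem edgeSet_subgraphOfEdges (s : Set (Sym2 V)) (hs : s ⊆ G.edgeSet) :
    (G.subgraphOfEdges s hs).edgeSet = s := by
  ext e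
  induction e using Sym2.ind
  exact Subgraph.mem_edgeSet

@[simp]
theorem verts_subgraphOfEdges (s : Set (Sym2 V)) (hs : s ⊆ G.edgeSet) :
    (G.subgraphOfEdges s hs).verts = {v | ∃ e ∈ s, v ∈ e} := rfl

theorem card_le_mul_card_biUnion_of_density_le [DecidableEq V] {d : ℕ}
    (h_dens : ∀ H : G.Subgraph, H.verts.Nonempty → H.edgeSet.ncard ≤ d * H.verts.ncard)
    (s : Finset G.edgeSet) : #s ≤ d * #(s.biUnion fun e => (e : Sym2 V).toFinset) := by
  rcases s.eq_empty_or_nonempty with rfl | ⟨e, he⟩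
  · simp
  let H := G.subgraphOfEdges (Subtype.val '' (s : Set G.edgeSet)) (by simp)
  have hverts : H.verts = ↑(s.biUnion fun e => (e : Sym2 V).toFinset) := by
    ext v; simp [H]
  have hne : H.verts.Nonempty := ⟨_, e, ⟨e, he, rfl⟩, Sym2.out_fst_mem _⟩
  have := h_dens H hne
  rwa [edgeSet_subgraphOfEdges, Set.ncard_image_of_injective _ Subtype.val_injective,
    Set.ncard_coe_finset, hverts, Set.ncard_coe_finset] at this

theorem exists_orientation_of_head [Finite V] {d : ℕ} (head : G.edgeSet → V)
    (h_mem : ∀ e : G.edgeSet, head e ∈ (e : Sym2 V)) (h_fiber : ∀ v, {e | head e = v}.ncard ≤ d) :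
    ∃ D : V → V → Prop,
      (∀ u v, G.Adj u v ↔ (D u v ∨ D v u)) ∧
      (∀ u v, D u v → ¬ D v u) ∧
      (∀ v, {u | D u v}.ncard ≤ d) := by
  have head_swap : ∀ {u v} (h : G.Adj u v), head ⟨s(v, u), h.symm⟩ = head ⟨s(u, v), h⟩ :=
    fun h => congrArg head (Subtype.ext Sym2.eq_swap)
  refine ⟨fun u v => ∃ h : G.Adj u v, head ⟨s(u, v), h⟩ = v, fun u v => ⟨fun h => ?_, ?_⟩,
    ?_, fun v => ?_⟩
  · rcases Sym2.mem_iff.mp (h_mem ⟨s(u, v), h⟩) with hu | hv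
    · exact Or.inr ⟨h.symm, (head_swap h).trans hu⟩
    · exact Or.inl ⟨h, hv⟩
  · rintro (⟨h, -⟩ | ⟨h, -⟩)
    exacts [h, h.symm]
  · rintro u v ⟨h, hv⟩ ⟨_, hu⟩
    exact h.ne (hu.symm.trans ((head_swap h).trans hv))
  · calc {u | ∃ h : G.Adj u v, head ⟨s(u, v), h⟩ = v}.ncard
        ≤ (Subtype.val '' {e : G.edgeSet | head e = v}).ncard := by
          refine Set.ncard_le_ncard_of_injOn (fun u => s(u, v)) ?_ ?_ ?_
          · rintro u ⟨h, hv⟩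
            exact ⟨⟨s(u, v), h⟩, hv, rfl⟩
          · exact fun _ _ _ _ huv => Sym2.congr_left.mp huv
          · exact Set.toFinite _
      _ ≤ d := (Set.ncard_image_of_injective _ Subtype.val_injective).trans_le (h_fiber v)

theorem Subgraph.ncard_edgeSet_le_mul_ncard_verts [Finite V] {d : ℕ} {D : V → V → Prop}
    (h_cover : ∀ u v, G.Adj u v → D u v ∨ D v u) (h_indeg : ∀ v, {u | D u v}.ncard ≤ d)
    (H : G.Subgraph) : H.edgeSet.ncard ≤ d * H.verts.ncard := by
  classical
  have := Fintype.ofFinite V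
  have h_sub : H.edgeSet ⊆ ⋃ v ∈ H.verts.toFinset, (fun u => s(u, v)) '' {u | D u v} := by
    intro e he
    induction e using Sym2.ind with
    | _ u v =>
      rw [Subgraph.mem_edgeSet] at he
      simp only [Set.mem_iUnion, Set.mem_toFinset, Set.mem_image, Set.mem_ofPred_eq]
      rcases h_cover u v he.adj_sub with h | h
      · exact ⟨v, H.edge_vert he.symm, u, h, rfl⟩
      · exact ⟨u, H.edge_vert he, v, h, Sym2.eq_swap⟩
  calc H.edgeSet.ncard
      ≤ (⋃ v ∈ H.verts.toFinset, (fun u => s(u, v)) '' {u | D u v}).ncard :=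
        Set.ncard_le_ncard h_sub
    _ ≤ ∑ v ∈ H.verts.toFinset, ((fun u => s(u, v)) '' {u | D u v}).ncard :=
        set_ncard_biUnion_le _ _
    _ ≤ ∑ _v ∈ H.verts.toFinset, d :=
        sum_le_sum fun v _ => (Set.ncard_image_le (Set.toFinite _)).trans (h_indeg v)
    _ = d * H.verts.ncard := by
        rw [sum_const, smul_eq_mul, Set.ncard_eq_toFinset_card', mul_comm]

end SimpleGraph

/-- Hakimi's theorem: a finite graph `G` has maximum density at most `d`
(every subgraph with nonempty vertex set has at most `d` times as many edges as vertices)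
iff there is an orientation of `G` in which every vertex has in-degree at most `d`. -/
theorem stmt2 {V : Type*} [Fintype V] (G : SimpleGraph V) (d : ℕ) :
    (∀ H : G.Subgraph, H.verts.Nonempty → H.edgeSet.ncard ≤ d * H.verts.ncard) ↔
    ∃ D : V → V → Prop,
      (∀ u v, G.Adj u v ↔ (D u v ∨ D v u)) ∧
      (∀ u v, D u v → ¬ D v u) ∧
      (∀ v, {u | D u v}.ncard ≤ d) := by
  classical
  refine ⟨fun h_dens => ?_, fun ⟨D, h_adj, _, h_indeg⟩ H _ => ?_⟩
  · obtain ⟨head, h_mem, h_fiber⟩ :=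
      exists_mem_ncard_fiber_le_of_card_le_mul_biUnion_card
        (fun e : G.edgeSet => (e : Sym2 V).toFinset) d
        (G.card_le_mul_card_biUnion_of_density_le h_dens)
    exact G.exists_orientation_of_head head (fun e => Sym2.mem_toFinset.mp (h_mem e)) h_fiber
  · exact H.ncard_edgeSet_le_mul_ncard_verts (fun u v => (h_adj u v).mp) h_indeg
end

section
/- Let J be a finite graph, and suppose each edge ij of J is assigned a set R_{ij} ⊆ V(J) \ {i,j} with |R_{ij}| ≤ N for some integer N ≥ 0. Suppose there is a real number β ≥ 0 such that every subgraph J' of J with the property that for every edge ij of J', no vertex of R_{ij} lies in V(J') has edge density at most β. Then J has edge density at most β·e·(N+1). -/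
/-!
Sample `S ⊆ V` by keeping each vertex independently with probability `p = 1/(N+1)`, and let
`J_S` be the subgraph on `S` keeping the edges `ij` of `J` with `R i j ∩ S = ∅`. Each `J_S`
satisfies the hypothesis, so `E |E(J_S)| ≤ β E |S| = β p |V|`, while every edge survives with
probability `p² (1-p)^|R i j| ≥ p² (1-p)^N`. Hence `|E(J)| ≤ β |V| / (p (1-p)^N)`, and
`(1 - 1/(N+1))^N ≥ e⁻¹`. Expectations are finite sums over `S` with weight
`p^|S| (1-p)^|Sᶜ|`.
-/

open Finset SimpleGraph

namespace Finset
variable {V R : Type*} [Fintype V] [DecidableEq V] [CommSemiring R]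

theorem sum_filter_subset_disjoint_pow_card_mul_pow_card_compl (p q : R) {A B : Finset V}
    (hAB : Disjoint A B) :
    ∑ S with A ⊆ S ∧ Disjoint B S, p ^ #S * q ^ #Sᶜ =
      p ^ #A * q ^ #B * (p + q) ^ #(A ∪ B)ᶜ := by
  set f : V → R := fun v => if v ∈ B then 0 else p
  set g : V → R := fun v => if v ∈ A then 0 else q
  have hterm : ∀ S : Finset V, (if A ⊆ S ∧ Disjoint B S then p ^ #S * q ^ #Sᶜ else 0) =
      (∏ v ∈ S, f v) * ∏ v ∈ univ \ S, g v := by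
    intro S
    rw [← compl_eq_univ_sdiff]
    split_ifs with h
    · rw [prod_congr rfl fun v hv => if_neg (disjoint_right.mp h.2 hv),
        prod_congr rfl fun v hv => if_neg fun hvA => mem_compl.mp hv (h.1 hvA),
        prod_const, prod_const]
    · rcases not_and_or.mp h with hA | hB
      · obtain ⟨a, haA, haS⟩ := not_subset.mp hA
        rw [Finset.prod_eq_zero (f := g) (mem_compl.mpr haS) (if_pos haA), mul_zero]
      · obtain ⟨b, hbB, hbS⟩ := not_disjoint_iff.mp hB
        rw [Finset.prod_eq_zero (f := f) hbS (if_pos hbB), zero_mul]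
  have hfg : ∀ v, f v + g v = if v ∈ A then p else if v ∈ B then q else p + q := by
    intro v
    by_cases hA : v ∈ A
    · simp [f, g, hA, disjoint_left.mp hAB hA]
    · by_cases hB : v ∈ B <;> simp [f, g, hA, hB]
  rw [sum_filter, sum_congr rfl fun S _ => hterm S, ← powerset_univ, ← prod_add,
    prod_congr rfl fun v _ => hfg v, prod_ite, prod_ite]
  simp only [filter_mem_eq_inter, filter_not, univ_inter, prod_const]
  have hB : univ \ A ∩ B = B := by
    ext v; simpa using fun hv hvA => disjoint_right.mp hAB hv hvA
  rw [hB, sdiff_sdiff_left, ← compl_eq_univ_sdiff, mul_assoc]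
  rfl

theorem sum_pow_card_mul_pow_card_compl_mul_card (p q : R) :
    ∑ S : Finset V, p ^ #S * q ^ #Sᶜ * #S =
      Fintype.card V * p * (p + q) ^ (Fintype.card V - 1) := by
  have hv (v : V) :
      ∑ S with v ∈ S, p ^ #S * q ^ #Sᶜ = p * (p + q) ^ (Fintype.card V - 1) := by
    simpa [card_compl] using
      sum_filter_subset_disjoint_pow_card_mul_pow_card_compl p q (disjoint_empty_right {v})
  calc ∑ S : Finset V, p ^ #S * q ^ #Sᶜ * #S
      = ∑ v : V, ∑ S with v ∈ S, p ^ #S * q ^ #Sᶜ := by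
        simp_rw [sum_filter]
        rw [sum_comm]
        simp [mul_comm]
    _ = Fintype.card V * p * (p + q) ^ (Fintype.card V - 1) := by
        simp [hv, mul_assoc]

end Finset

namespace SimpleGraph
variable {V : Type*} (J : SimpleGraph V)

theorem Subgraph.ncard_edgeSet_eq_card_filter [Fintype V] [DecidableRel J.Adj] (H : J.Subgraph)
    [DecidablePred (· ∈ H.edgeSet)] :
    H.edgeSet.ncard = #{e ∈ J.edgeFinset | e ∈ H.edgeSet} := by
  rw [← Set.ncard_coe_finset, coe_filter]
  congr 1
  ext e
  simpa using fun he => H.edgeSet_subset he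

open scoped Classical in
theorem sum_mul_ncard_edgeSet_eq [Fintype V] {ι 𝕜 : Type*} [CommSemiring 𝕜] (s : Finset ι)
    (w : ι → 𝕜) (H : ι → J.Subgraph) :
    ∑ x ∈ s, w x * (H x).edgeSet.ncard =
      ∑ e ∈ J.edgeFinset, ∑ x ∈ s with e ∈ (H x).edgeSet, w x := by
  simp_rw [Subgraph.ncard_edgeSet_eq_card_filter, card_filter, Nat.cast_sum, mul_sum, sum_filter]
  rw [sum_comm]
  simp

variable (R : V → V → Set V)

/-- Both `R i j` and `R j i` must miss `S`, so that adjacency is symmetric for any `R`. -/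
def avoidingSubgraph (S : Set V) : J.Subgraph where
  verts := S
  Adj i j := J.Adj i j ∧ i ∈ S ∧ j ∈ S ∧ Disjoint (R i j) S ∧ Disjoint (R j i) S
  adj_sub h := h.1
  edge_vert h := h.2.1
  symm := ⟨fun _ _ ⟨h, hi, hj, hij, hji⟩ => ⟨h.symm, hj, hi, hji, hij⟩⟩

variable {J R}

theorem mk_mem_edgeSet_avoidingSubgraph_iff {S : Set V} {i j : V} (hR : R i j = R j i)
    (h : J.Adj i j) :
    s(i, j) ∈ (J.avoidingSubgraph R S).edgeSet ↔
      i ∈ S ∧ j ∈ S ∧ Disjoint (R i j) S := by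
  simp [avoidingSubgraph, h, ← hR]

open scoped Classical in
theorem sum_filter_mk_mem_edgeSet_avoidingSubgraph [Fintype V] {i j : V} (p : ℝ)
    (hR : R i j = R j i) (h : J.Adj i j) (hi : i ∉ R i j) (hj : j ∉ R i j) :
    ∑ S with s(i, j) ∈ (J.avoidingSubgraph R (S : Finset V)).edgeSet, p ^ #S * (1 - p) ^ #Sᶜ =
      p ^ 2 * (1 - p) ^ (R i j).ncard := by
  have hmem : ∀ S : Finset V, s(i, j) ∈ (J.avoidingSubgraph R S).edgeSet ↔
      {i, j} ⊆ S ∧ Disjoint (R i j).toFinset S := by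
    intro S
    rw [mk_mem_edgeSet_avoidingSubgraph_iff hR h, insert_subset_iff, singleton_subset_iff,
      and_assoc, ← Set.disjoint_toFinset, toFinset_coe, mem_coe, mem_coe]
  have hdisj : Disjoint {i, j} (R i j).toFinset := by
    simpa [disjoint_insert_left] using ⟨hi, hj⟩
  rw [filter_congr fun S _ => hmem S,
    sum_filter_subset_disjoint_pow_card_mul_pow_card_compl p (1 - p) hdisj,
    card_pair h.ne, Set.ncard_eq_toFinset_card']
  simp

open scoped Classical in
theorem card_edgeFinset_mul_le_sum_mul_ncard_edgeSet_avoidingSubgraph [Fintype V] {N : ℕ}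
    {p : ℝ} (hp0 : 0 ≤ p) (hp1 : p ≤ 1) (hsymm : ∀ i j, R i j = R j i)
    (hnotin : ∀ i j, J.Adj i j → i ∉ R i j ∧ j ∉ R i j)
    (hcard : ∀ i j, J.Adj i j → (R i j).ncard ≤ N) :
    #J.edgeFinset * (p ^ 2 * (1 - p) ^ N) ≤
      ∑ S : Finset V, p ^ #S * (1 - p) ^ #Sᶜ * (J.avoidingSubgraph R S).edgeSet.ncard := by
  rw [sum_mul_ncard_edgeSet_eq, ← nsmul_eq_mul, ← sum_const]
  refine sum_le_sum fun e he => ?_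
  induction e using Sym2.ind with
  | _ i j =>
    have h : J.Adj i j := mem_edgeFinset.mp he
    rw [sum_filter_mk_mem_edgeSet_avoidingSubgraph p (hsymm i j) h (hnotin i j h).1
      (hnotin i j h).2]
    exact mul_le_mul_of_nonneg_left
      (pow_le_pow_of_le_one (by linarith) (by linarith) (hcard i j h)) (by positivity)

theorem ncard_edgeSet_avoidingSubgraph_le {β : ℝ}
    (hsub : ∀ J' : J.Subgraph, (∀ i j, J'.Adj i j → ∀ ℓ ∈ R i j, ℓ ∉ J'.verts) →
      J'.verts.Nonempty → (J'.edgeSet.ncard : ℝ) ≤ β * J'.verts.ncard) (S : Finset V) :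
    ((J.avoidingSubgraph R S).edgeSet.ncard : ℝ) ≤ β * #S := by
  rcases S.eq_empty_or_nonempty with rfl | hS
  · have : (J.avoidingSubgraph R (∅ : Set V)).edgeSet = ∅ := by
      ext e
      induction e using Sym2.ind
      simp [avoidingSubgraph]
    simp [this]
  · simpa [avoidingSubgraph] using hsub (J.avoidingSubgraph R S)
      (fun _ _ h _ hℓ => Set.disjoint_left.mp h.2.2.2.1 hℓ) (coe_nonempty.mpr hS)

theorem ncard_edgeSet_mul_le_of_avoiding_density_le [Fintype V] {N : ℕ} {β p : ℝ}
    (hp0 : 0 ≤ p) (hp1 : p ≤ 1) (hsymm : ∀ i j, R i j = R j i)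
    (hnotin : ∀ i j, J.Adj i j → i ∉ R i j ∧ j ∉ R i j)
    (hcard : ∀ i j, J.Adj i j → (R i j).ncard ≤ N)
    (hsub : ∀ J' : J.Subgraph, (∀ i j, J'.Adj i j → ∀ ℓ ∈ R i j, ℓ ∉ J'.verts) →
      J'.verts.Nonempty → (J'.edgeSet.ncard : ℝ) ≤ β * J'.verts.ncard) :
    (J.edgeSet.ncard : ℝ) * (p ^ 2 * (1 - p) ^ N) ≤ β * (Fintype.card V * p) := by
  classical
  calc (J.edgeSet.ncard : ℝ) * (p ^ 2 * (1 - p) ^ N)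
      ≤ ∑ S : Finset V, p ^ #S * (1 - p) ^ #Sᶜ * (J.avoidingSubgraph R S).edgeSet.ncard := by
        rw [← coe_edgeFinset, Set.ncard_coe_finset]
        exact card_edgeFinset_mul_le_sum_mul_ncard_edgeSet_avoidingSubgraph hp0 hp1 hsymm
          hnotin hcard
    _ ≤ ∑ S : Finset V, p ^ #S * (1 - p) ^ #Sᶜ * (β * #S) := by
        gcongr with S
        exact ncard_edgeSet_avoidingSubgraph_le hsub S
    _ = β * (Fintype.card V * p) := by
        simp_rw [mul_left_comm _ β, ← mul_sum, sum_pow_card_mul_pow_card_compl_mul_card]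
        simp

end SimpleGraph

theorem Real.exp_neg_one_le_one_sub_inv_pow (N : ℕ) :
    exp (-1) ≤ (1 - ((N : ℝ) + 1)⁻¹) ^ N := by
  have h : (1 - ((N : ℝ) + 1)⁻¹) ^ N * (1 + (N : ℝ)⁻¹) ^ N = 1 := by
    rw [← mul_pow]
    rcases N.eq_zero_or_pos with rfl | hN
    · simp
    · have : (N : ℝ) ≠ 0 := by positivity
      field_simp
      simp [this]
  have hq : 0 ≤ 1 - ((N : ℝ) + 1)⁻¹ := sub_nonneg.mpr (inv_le_one_of_one_le₀ (by simp))
  calc exp (-1) = exp (-1) * ((1 - ((N : ℝ) + 1)⁻¹) ^ N * (1 + (N : ℝ)⁻¹) ^ N) := by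
        rw [h, mul_one]
    _ ≤ exp (-1) * ((1 - ((N : ℝ) + 1)⁻¹) ^ N * exp 1) := by
        gcongr
        exact one_add_inv_pow_le_exp
    _ = (1 - ((N : ℝ) + 1)⁻¹) ^ N := by
        rw [mul_left_comm, ← exp_add]
        simp

theorem stmt7_general {V : Type*} [Fintype V] (J : SimpleGraph V) (N : ℕ)
    (β : ℝ)
    (R : V → V → Set V) (hsymm : ∀ i j, R i j = R j i)
    (hnotin : ∀ i j, J.Adj i j → i ∉ R i j ∧ j ∉ R i j)
    (hcard : ∀ i j, J.Adj i j → (R i j).ncard ≤ N)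
    (hsub : ∀ J' : J.Subgraph,
      (∀ i j, J'.Adj i j → ∀ ℓ ∈ R i j, ℓ ∉ J'.verts) →
      J'.verts.Nonempty → (J'.edgeSet.ncard : ℝ) ≤ β * J'.verts.ncard) :
    (J.edgeSet.ncard : ℝ) ≤ β * Real.exp 1 * ((N : ℝ) + 1) * Fintype.card V := by
  set p : ℝ := ((N : ℝ) + 1)⁻¹ with hp
  have hp0 : 0 ≤ p := by positivity
  have hp1 : p ≤ 1 := inv_le_one_of_one_le₀ (by simp)
  have hE := ncard_edgeSet_mul_le_of_avoiding_density_le hp0 hp1 hsymm hnotin hcard hsub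
  calc (J.edgeSet.ncard : ℝ)
      = J.edgeSet.ncard * p ^ 2 * Real.exp (-1) * (Real.exp 1 * ((N : ℝ) + 1) ^ 2) := by
        rw [hp, Real.exp_neg]
        field_simp
    _ ≤ J.edgeSet.ncard * (p ^ 2 * (1 - p) ^ N) * (Real.exp 1 * ((N : ℝ) + 1) ^ 2) := by
        rw [mul_assoc _ (p ^ 2)]
        gcongr
        exact Real.exp_neg_one_le_one_sub_inv_pow N
    _ ≤ β * (Fintype.card V * p) * (Real.exp 1 * ((N : ℝ) + 1) ^ 2) := by gcongr
    _ = β * Real.exp 1 * ((N : ℝ) + 1) * Fintype.card V := by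
        rw [hp]
        field_simp

/-- Probabilistic sampling lemma (combinatorial form).  Let `J` be a finite nonempty
graph, and suppose each edge `ij` of `J` is assigned a set `R i j ⊆ V(J) \ {i,j}` with
`|R i j| ≤ N`.  If every subgraph `J'` of `J` such that for every edge `ij` of `J'` no
vertex of `R i j` lies in `V(J')` has edge density at most `β`, then `J` has edge
density at most `β·e·(N+1)`. -/
theorem stmt7 {V : Type*} [Fintype V] [Nonempty V] (J : SimpleGraph V) (N : ℕ)
    (β : ℝ) (hβ : 0 ≤ β)
    (R : V → V → Set V) (hsymm : ∀ i j, R i j = R j i)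
    (hnotin : ∀ i j, J.Adj i j → i ∉ R i j ∧ j ∉ R i j)
    (hcard : ∀ i j, J.Adj i j → (R i j).ncard ≤ N)
    (hsub : ∀ J' : J.Subgraph,
      (∀ i j, J'.Adj i j → ∀ ℓ ∈ R i j, ℓ ∉ J'.verts) →
      J'.verts.Nonempty → (J'.edgeSet.ncard : ℝ) ≤ β * J'.verts.ncard) :
    (J.edgeSet.ncard : ℝ) ≤ β * Real.exp 1 * ((N : ℝ) + 1) * Fintype.card V :=
  stmt7_general J N β R hsymm hnotin hcard hsub
end

section
/- For integers d ≥ 2, r ≥ 1, there exists a finite graph G with maximum density at most d that contains K_{(d−1)(2r+1)} as an r-shallow minor; consequently ∇_r(G) ≥ dr + d/2 − r − 1 for this G. -/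
/-- `S` is an `r`-shallow model of `J` in `G`. -/
def ShallowModel {V W : Type*} (r : ℕ) (J : SimpleGraph W) (G : SimpleGraph V)
    (S : W → Set V) : Prop :=
  (∀ i, ∃ c : S i, ∀ w : S i, ∃ p : (G.induce (S i)).Walk c w, p.length ≤ r) ∧
  (Pairwise fun i j => Disjoint (S i) (S j)) ∧
  (∀ i j, J.Adj i j → ∃ u ∈ S i, ∃ v ∈ S j, G.Adj u v)

/-- `J` is an `r`-shallow minor of `G`. -/
def IsShallowMinor {V W : Type*} (r : ℕ) (J : SimpleGraph W) (G : SimpleGraph V) : Prop :=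
  ∃ S : W → Set V, ShallowModel r J G S

namespace Stmt14

/-- A walk along a chain of successively adjacent vertices. -/
lemma chainWalk {V : Type*} (G : SimpleGraph V) (u : ℕ → V) :
    ∀ b a, a ≤ b → (∀ i, a ≤ i → i < b → G.Adj (u i) (u (i+1))) →
      ∃ p : G.Walk (u a) (u b), p.length = b - a := by
  intro b
  induction b with
  | zero =>
    intro a ha _
    obtain rfl : a = 0 := by omega
    exact ⟨.nil, rfl⟩
  | succ b ih =>
    intro a ha hadj
    rcases Nat.eq_or_lt_of_le ha with h | h
    · subst h
      exact ⟨.nil, by simp⟩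
    · have ha' : a ≤ b := by omega
      obtain ⟨p, hp⟩ := ih a ha' (fun i h1 h2 => hadj i h1 (by omega))
      exact ⟨p.concat (hadj b ha' (by omega)), by
        rw [SimpleGraph.Walk.length_concat]; omega⟩

variable (d r : ℕ)

abbrev Vt := (Fin (2*r+1) × Fin ((d-1)*(2*r+1))) ⊕ (Fin (2*r+1) × Fin (d-1))

def fcol : Fin ((d-1)*(2*r+1)) ≃ Fin (2*r+1) × Fin (d-1) :=
  finProdFinEquiv.symm.trans (Equiv.prodComm _ _)

def R : Vt d r → Vt d r → Prop
  | .inl (i,j), .inl (i',j') => j = j' ∧ i'.val = i.val + 1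
  | .inr (i,_), .inl (i',_) => i = i'
  | .inl (i,j), .inr q => i.val = r ∧ q = fcol d r j
  | .inr _, .inr _ => False

def G : SimpleGraph (Vt d r) := SimpleGraph.fromRel (R d r)

def F : Vt d r → Vt d r → Vt d r × ℕ
  | .inl (i,j), .inl (i',j') =>
      if i < i' then (.inl (i',j'), 0)
      else if i' < i then (.inl (i,j), 0)
      else (.inl (i, max j j'), 0)
  | .inl (i,j), .inr (i',k) => if i' = i then (.inl (i,j), k.val+1) else (.inr (i',k), 0)
  | .inr (i',k), .inl (i,j) => if i' = i then (.inl (i,j), k.val+1) else (.inr (i',k), 0)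
  | .inr (a,b), .inr (a',b') => (.inr (max a a', max b b'), 0)

lemma Fsymm : ∀ a b : Vt d r, F d r a b = F d r b a := by
  rintro (⟨i,j⟩|⟨i,k⟩) (⟨i',j'⟩|⟨i',k'⟩)
  · simp only [F]
    rcases lt_trichotomy i i' with h | h | h
    · simp only [if_pos h, if_neg (asymm h)]
    · subst h
      simp [lt_irrefl, max_comm]
    · simp only [if_pos h, if_neg (asymm h)]
  · rfl
  · rfl
  · simp only [F, max_comm i i', max_comm k k']

def Phi : Sym2 (Vt d r) → Vt d r × ℕ := Sym2.lift ⟨F d r, Fsymm d r⟩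

def Psi (hd : 2 ≤ d) : Vt d r × ℕ → Sym2 (Vt d r)
  | (.inl (i,j), 0) =>
      s(.inl (⟨i.val - 1, lt_of_le_of_lt (Nat.sub_le _ _) i.isLt⟩, j), .inl (i,j))
  | (.inl (i,j), k+1) => s(.inr (i, ⟨min k (d-2), by omega⟩), .inl (i,j))
  | (.inr q, _) => s(.inl (⟨r, by omega⟩, (fcol d r).symm q), .inr q)

lemma recover (hd : 2 ≤ d) : ∀ a b : Vt d r, (G d r).Adj a b →
    Psi d r hd (F d r a b) = s(a,b) := by
  rintro (⟨i,j⟩|⟨i,k⟩) (⟨i',j'⟩|⟨i',k'⟩) hab <;>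
    rw [G, SimpleGraph.fromRel_adj] at hab <;>
    obtain ⟨hne, hR⟩ := hab
  · -- inl inl
    rcases hR with ⟨hj, hi⟩ | ⟨hj, hi⟩
    · have hlt : i < i' := Fin.lt_def.mpr (by omega)
      have h1 : F d r (.inl (i,j)) (.inl (i',j')) = (.inl (i',j'), 0) := by
        simp only [F, if_pos hlt]
      rw [h1]
      simp only [Psi, hj, Sym2.eq_iff, Sum.inl.injEq, Prod.mk.injEq, Fin.ext_iff,
        and_true, true_and, and_self, or_false, false_or]
      first
      | omega
      | exact Or.inl (by omega)
      | exact Or.inl ⟨by omega, by omega⟩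
    · have hlt : i' < i := Fin.lt_def.mpr (by omega)
      have h1 : F d r (.inl (i,j)) (.inl (i',j')) = (.inl (i,j), 0) := by
        simp only [F, if_pos hlt, if_neg (asymm hlt)]
      rw [h1]
      simp only [Psi, hj, Sym2.eq_iff, Sum.inl.injEq, Prod.mk.injEq, Fin.ext_iff,
        and_true, true_and, and_self, or_false, false_or]
      first
      | omega
      | exact Or.inr (by omega)
      | exact Or.inr ⟨by omega, by omega⟩
  · -- inl inr
    by_cases h : i' = i
    · have h1 : F d r (.inl (i,j)) (.inr (i',k')) = (.inl (i,j), k'.val+1) := by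
        simp only [F, if_pos h]
      rw [h1]
      have hk := k'.isLt
      simp only [Psi, h, Sym2.eq_iff, Sum.inl.injEq, Sum.inr.injEq, Prod.mk.injEq,
        Fin.ext_iff, reduceCtorEq, and_true, true_and, and_self, or_false, false_or,
        false_and, and_false]
      first
      | omega
      | exact Or.inr (by omega)
      | exact Or.inr ⟨by omega, by omega⟩
    · have h3 : i.val = r ∧ (i', k') = fcol d r j := by
        rcases hR with h' | h'
        · exact h'
        · exact absurd h' h
      obtain ⟨hir, hq⟩ := h3
      have h1 : F d r (.inl (i,j)) (.inr (i',k')) = (.inr (i',k'), 0) := by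
        simp only [F, if_neg h]
      rw [h1]
      simp only [Psi, hq, Equiv.symm_apply_apply, Sym2.eq_iff, Sum.inl.injEq,
        Sum.inr.injEq, Prod.mk.injEq, Fin.ext_iff, reduceCtorEq, and_true, true_and,
        and_self, or_false, false_or, false_and, and_false]
      first
      | omega
      | exact Or.inr (by omega)
      | exact Or.inr ⟨by omega, by omega⟩
  · -- inr inl
    by_cases h : i = i'
    · have h1 : F d r (.inr (i,k)) (.inl (i',j')) = (.inl (i',j'), k.val+1) := by
        simp only [F, if_pos h]
      rw [h1]
      have hk := k.isLt
      simp only [Psi, h, Sym2.eq_iff, Sum.inl.injEq, Sum.inr.injEq, Prod.mk.injEq,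
        Fin.ext_iff, reduceCtorEq, and_true, true_and, and_self, or_false, false_or,
        false_and, and_false]
      first
      | omega
      | exact Or.inl (by omega)
      | exact Or.inl ⟨by omega, by omega⟩
    · have h3 : i'.val = r ∧ (i, k) = fcol d r j' := by
        rcases hR with h' | h'
        · exact absurd h' h
        · exact h'
      obtain ⟨hir, hq⟩ := h3
      have h1 : F d r (.inr (i,k)) (.inl (i',j')) = (.inr (i,k), 0) := by
        simp only [F, if_neg h]
      rw [h1]
      simp only [Psi, hq, Equiv.symm_apply_apply, Sym2.eq_iff, Sum.inl.injEq,
        Sum.inr.injEq, Prod.mk.injEq, Fin.ext_iff, reduceCtorEq, and_true, true_and,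
        and_self, or_false, false_or, false_and, and_false]
      first
      | omega
      | exact Or.inr (by omega)
      | exact Or.inr ⟨by omega, by omega⟩
  · -- inr inr
    rcases hR with h | h <;> exact h.elim

lemma Fmem (hd : 2 ≤ d) : ∀ a b : Vt d r, (G d r).Adj a b →
    ((F d r a b).1 = a ∨ (F d r a b).1 = b) ∧ (F d r a b).2 < d := by
  rintro (⟨i,j⟩|⟨i,k⟩) (⟨i',j'⟩|⟨i',k'⟩) hab <;>
    rw [G, SimpleGraph.fromRel_adj] at hab <;>
    obtain ⟨hne, hR⟩ := hab
  · have : i < i' ∨ i' < i := by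
      rcases hR with ⟨hj, hi⟩ | ⟨hj, hi⟩ <;> [left; right] <;> exact Fin.lt_def.mpr (by omega)
    rcases this with h | h
    · simp only [F, if_pos h]
      exact ⟨by simp, by omega⟩
    · simp only [F, if_pos h, if_neg (asymm h)]
      exact ⟨by simp, by omega⟩
  · by_cases h : i' = i
    · simp only [F, if_pos h]
      refine ⟨by simp, ?_⟩
      have := k'.isLt
      omega
    · simp only [F, if_neg h]
      exact ⟨by simp, by omega⟩
  · by_cases h : i = i'
    · simp only [F, if_pos h]
      refine ⟨by simp, ?_⟩
      have := k.isLt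
      omega
    · simp only [F, if_neg h]
      exact ⟨by simp, by omega⟩
  · rcases hR with h | h <;> exact h.elim

lemma ncard_prod_aux {α β : Type*} (s : Set α) (t : Set β) :
    (s ×ˢ t).ncard = s.ncard * t.ncard := by
  rw [← Nat.card_coe_set_eq, ← Nat.card_coe_set_eq, ← Nat.card_coe_set_eq,
    Nat.card_congr (Equiv.Set.prod s t), Nat.card_prod]

lemma density (hd : 2 ≤ d) (H : (G d r).Subgraph) :
    (H.edgeSet.ncard : ℝ) ≤ d * H.verts.ncard := by
  have key : H.edgeSet.ncard ≤ H.verts.ncard * d := by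
    have h1 : H.edgeSet.ncard ≤ (H.verts ×ˢ Set.Iio d).ncard := by
      apply Set.ncard_le_ncard_of_injOn (Phi d r)
      · intro e he
        induction e using Sym2.ind with
        | _ a b =>
          rw [SimpleGraph.Subgraph.mem_edgeSet] at he
          have hG : (G d r).Adj a b := H.adj_sub he
          obtain ⟨h1, h2⟩ := Fmem d r hd a b hG
          have he1 : Phi d r s(a,b) = F d r a b := rfl
          rw [he1]
          constructor
          · rcases h1 with h | h <;> rw [h]
            · exact H.edge_vert he
            · exact H.edge_vert he.symm
          · exact h2
      · intro e1 he1 e2 he2 heq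
        induction e1 using Sym2.ind with
        | _ a b =>
        induction e2 using Sym2.ind with
        | _ a' b' =>
          rw [SimpleGraph.Subgraph.mem_edgeSet] at he1 he2
          have r1 := recover d r hd a b (H.adj_sub he1)
          have r2 := recover d r hd a' b' (H.adj_sub he2)
          have q1 : Phi d r s(a,b) = F d r a b := rfl
          have q2 : Phi d r s(a',b') = F d r a' b' := rfl
          rw [q1, q2] at heq
          rw [← r1, ← r2, heq]
    rw [ncard_prod_aux] at h1
    have h2 : (Set.Iio d).ncard = d := by
      rw [← Finset.coe_Iio, Set.ncard_coe_finset, Nat.card_Iio]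
    rw [h2] at h1
    exact h1
  calc (H.edgeSet.ncard : ℝ) ≤ (H.verts.ncard * d : ℕ) := by exact_mod_cast key
  _ = d * H.verts.ncard := by push_cast; ring

def S : Fin ((d-1)*(2*r+1)) → Set (Vt d r) :=
  fun j => {v | (∃ i, v = .inl (i, j)) ∨ v = .inr (fcol d r j)}

def colv (j : Fin ((d-1)*(2*r+1))) (t : ℕ) : ↥(S d r j) :=
  ⟨.inl (⟨min t (2*r), by omega⟩, j), Or.inl ⟨_, rfl⟩⟩

lemma colv_val (j : Fin ((d-1)*(2*r+1))) (t : ℕ) :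
    (colv d r j t : Vt d r) = .inl (⟨min t (2*r), by omega⟩, j) := rfl

lemma model (hd : 2 ≤ d) (hr : 1 ≤ r) :
    ShallowModel r (⊤ : SimpleGraph (Fin ((d-1)*(2*r+1)))) (G d r) (S d r) := by
  refine ⟨?_, ?_, ?_⟩
  · -- radius condition
    intro j
    have hadj : ∀ t, t < 2*r →
        ((G d r).induce (S d r j)).Adj (colv d r j t) (colv d r j (t+1)) := by
      intro t ht
      show (G d r).Adj _ _
      rw [G, SimpleGraph.fromRel_adj]
      constructor
      · intro h
        simp only [Function.Embedding.coe_subtype] at h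
        rw [colv_val, colv_val] at h
        simp only [Sum.inl.injEq, Prod.mk.injEq, Fin.mk.injEq] at h
        omega
      · exact Or.inl ⟨rfl, (by omega : min (t+1) (2*r) = min t (2*r) + 1)⟩
    refine ⟨colv d r j r, ?_⟩
    rintro ⟨w, hw | hw⟩
    · obtain ⟨i, rfl⟩ := hw
      have hwu : (⟨.inl (i, j), Or.inl ⟨i, rfl⟩⟩ : ↥(S d r j)) = colv d r j i.val := by
        apply Subtype.ext
        rw [colv_val]
        exact congrArg (fun x => Sum.inl (x, j))
          (Fin.ext (show i.val = min i.val (2*r) by have := i.isLt; omega))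
      rcases le_or_gt i.val r with h | h
      · obtain ⟨p, hp⟩ := chainWalk _ (colv d r j) r i.val h
          (fun t h1 h2 => hadj t (by omega))
        exact ⟨(p.reverse.copy rfl hwu.symm), by
          rw [SimpleGraph.Walk.length_copy, SimpleGraph.Walk.length_reverse]; omega⟩
      · obtain ⟨p, hp⟩ := chainWalk _ (colv d r j) i.val r (by omega)
          (fun t h1 h2 => hadj t (by have := i.isLt; omega))
        exact ⟨(p.copy rfl hwu.symm), by
          rw [SimpleGraph.Walk.length_copy]
          have := i.isLt; omega⟩
    · have hadj2 : ((G d r).induce (S d r j)).Adj (colv d r j r)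
          ⟨.inr (fcol d r j), Or.inr rfl⟩ := by
        show (G d r).Adj _ _
        rw [G, SimpleGraph.fromRel_adj]
        refine ⟨?_, Or.inl ⟨(by omega : min r (2*r) = r), rfl⟩⟩
        simp only [Function.Embedding.coe_subtype]
        rw [colv_val]
        simp
      refine ⟨(SimpleGraph.Walk.cons hadj2 .nil).copy rfl (Subtype.ext hw.symm), ?_⟩
      rw [SimpleGraph.Walk.length_copy]
      simpa using hr
  · -- disjointness
    intro j j' hjj'
    rw [Set.disjoint_left]
    rintro v (⟨i, rfl⟩ | rfl) (⟨i', h⟩ | h)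
    · simp only [Sum.inl.injEq, Prod.mk.injEq] at h
      exact hjj' h.2
    · simp at h
    · simp at h
    · simp only [Sum.inr.injEq] at h
      exact hjj' ((fcol d r).injective h)
  · -- adjacency
    intro a b hab
    refine ⟨.inr (fcol d r a), Or.inr rfl, .inl ((fcol d r a).1, b), Or.inl ⟨_, rfl⟩, ?_⟩
    rw [G, SimpleGraph.fromRel_adj]
    exact ⟨by simp, Or.inl rfl⟩

end Stmt14

/-- For integers `d ≥ 2`, `r ≥ 1` there is a finite graph `G` with maximum density at
most `d` containing `K_{(d-1)(2r+1)}` as an `r`-shallow minor; consequently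
`∇_r(G) ≥ dr + d/2 - r - 1` since this complete graph has edge density
`((d-1)(2r+1)-1)/2 = dr + d/2 - r - 1`. -/
theorem stmt14 (d r : ℕ) (hd : 2 ≤ d) (hr : 1 ≤ r) :
    ∃ (V : Type) (_ : Fintype V) (G : SimpleGraph V),
      (∀ H : G.Subgraph, H.verts.Nonempty → (H.edgeSet.ncard : ℝ) ≤ d * H.verts.ncard) ∧
      IsShallowMinor r (⊤ : SimpleGraph (Fin ((d - 1) * (2 * r + 1)))) G ∧
      (d : ℝ) * r + (d : ℝ) / 2 - r - 1 ≤
        ((⊤ : SimpleGraph (Fin ((d - 1) * (2 * r + 1)))).edgeSet.ncard : ℝ) /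
          (((d - 1) * (2 * r + 1) : ℕ) : ℝ) := by
  refine ⟨Stmt14.Vt d r, inferInstance, Stmt14.G d r, ?_, ?_, ?_⟩
  · intro H _
    exact Stmt14.density d r hd H
  · exact ⟨Stmt14.S d r, Stmt14.model d r hd hr⟩
  · set n := (d - 1) * (2 * r + 1) with hn
    have hn3 : 3 ≤ n := by
      have h1 : 1 * (2*r+1) ≤ (d-1) * (2*r+1) := Nat.mul_le_mul_right _ (by omega)
      omega
    have hcard : (⊤ : SimpleGraph (Fin n)).edgeSet.ncard = n.choose 2 := by
      rw [Set.ncard_eq_toFinset_card']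
      have := SimpleGraph.card_edgeFinset_top_eq_card_choose_two (V := Fin n)
      simpa [SimpleGraph.edgeFinset, Fintype.card_fin] using this
    rw [hcard]
    have hnR : (n : ℝ) = ((d : ℝ) - 1) * (2 * (r : ℝ) + 1) := by
      rw [hn]
      push_cast [Nat.cast_sub (by omega : 1 ≤ d)]
      ring
    have hch : ((n.choose 2 : ℕ) : ℝ) = (n : ℝ) * ((n : ℝ) - 1) / 2 :=
      Nat.cast_choose_two (K := ℝ) n
    rw [hch]
    have hnpos : (0 : ℝ) < (n : ℝ) := by exact_mod_cast (by omega : 0 < n)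
    have heq : ((n : ℝ) * ((n : ℝ) - 1) / 2) / (n : ℝ) = ((n : ℝ) - 1) / 2 := by
      field_simp
    rw [heq, hnR]
    nlinarith [hnpos]
end

section
/- Let G be a region intersection graph over a graph H via trees (A_v : v ∈ V(G)) in H, let (S_i : i ∈ V(J)) be a model of a graph J in G properly represented by paths (Q_{ij}), and suppose G has an orientation making J junction-free. If c_i c_j is an edge of G for distinct i, j both of degree at least 2 in J, then a junction exists in J — contradiction; hence {c_i : deg_J(i) ≥ 2} is an independent set in G and the trees A_{c_i} for these i are pairwise vertex-disjoint. -/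
/-- From ncard ≥ 2, get an element of the set different from any given j. -/
lemma exists_ne_of_two_le_ncard {α : Type*} {s : Set α} (h : 2 ≤ s.ncard) (j : α) :
    ∃ k ∈ s, k ≠ j := by
  obtain ⟨b, hb, hbj⟩ := Set.exists_ne_of_one_lt_ncard h j
  exact ⟨b, hb, hbj⟩

/-- Claim 2.4 of the paper.  Let `G` be a region intersection graph over a graph with
vertex set `U`, witnessed by connected regions `A v ⊆ U`, let `(S i : i ∈ V(J))` be a
model of `J` in `G` with pairwise disjoint branch sets, roots `c i ∈ S i`, properly
represented by paths `Q i j` (so `c i ∈ Q i j` for every edge `ij` of `J`), and suppose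
`G` has an orientation `D` making `J` junction-free.  Then the roots `c i` of vertices
`i` of degree at least 2 in `J` form an independent set in `G`, and the corresponding
regions `A (c i)` are pairwise disjoint. -/
theorem stmt17 {V W U : Type*} (G : SimpleGraph V) (J : SimpleGraph W)
    (A : V → Set U)
    (hRIG : ∀ u v : V, u ≠ v → (G.Adj u v ↔ (A u ∩ A v).Nonempty))
    (S : W → Set V) (hSdisj : Pairwise fun i j => Disjoint (S i) (S j))
    (c : W → V) (hc : ∀ i, c i ∈ S i)
    (Q : W → W → Set V)
    (hQc : ∀ i j, J.Adj i j → c i ∈ Q i j)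
    (D : V → V → Prop) (hor : ∀ u v, G.Adj u v ↔ (D u v ∨ D v u))
    (hfree : ∀ a b i j ℓ, J.Adj i j → D a b → b ∈ Q i j → ℓ ≠ i → ℓ ≠ j → a ∉ S ℓ) :
    ∀ i j : W, i ≠ j →
      2 ≤ (J.neighborSet i).ncard → 2 ≤ (J.neighborSet j).ncard →
      ¬ G.Adj (c i) (c j) ∧ Disjoint (A (c i)) (A (c j)) := by
  intro i j hij hi hj
  obtain ⟨k, hk, hkj⟩ := exists_ne_of_two_le_ncard hi j
  obtain ⟨l, hl, hli⟩ := exists_ne_of_two_le_ncard hj i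
  have hcij : c i ≠ c j := by
    intro h
    exact (hSdisj hij).ne_of_mem (hc i) (hc j) h
  have hnadj : ¬ G.Adj (c i) (c j) := by
    intro hadj
    rcases (hor _ _).mp hadj with hD | hD
    · -- c j ∈ Q j l, a = c i ∈ S i, i ≠ j, i ≠ l
      exact hfree (c i) (c j) j l i hl hD (hQc j l hl) hij (Ne.symm hli) (hc i)
    · exact hfree (c j) (c i) i k j hk hD (hQc i k hk) hij.symm (Ne.symm hkj) (hc j)
  refine ⟨hnadj, ?_⟩
  rw [Set.disjoint_iff_inter_eq_empty, ← Set.not_nonempty_iff_eq_empty]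
  intro hne
  exact hnadj ((hRIG _ _ hcij).mpr hne)
end
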